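/- Removing the edge a4 a2' from the 17-vertex counterexample graph G yields a disconnected plane graph with maximum degree 4 that still admits no proper coloring with colors in {1,2,3,4} in which every face has the unique-maximum property. -/
import Mathlib

/-- The maximum of three values is attained at exactly one of them. -/
def UM3 (x y z : ℕ) : Prop :=
  (y < x ∧ z < x) ∨ (x < y ∧ z < y) ∨ (x < z ∧ y < z)

/-- The maximum of four values is attained at exactly one of them. -/
def UM4 (w x y z : ℕ) : Prop :=
  (x < w ∧ y < w ∧ z < w) ∨ (w < x ∧ y < x ∧ z < x) ∨
  (w < y ∧ x < y ∧ z < y) ∨ (w < z ∧ x < z ∧ y < z)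

/-- The maximum of a list of values is attained at exactly one position. -/
def UMList (l : List ℕ) : Prop :=
  (l.filter fun v => decide (∀ w ∈ l, w ≤ v)).length = 1

/-- Properness and the unique-maximum property for all bounded faces of one copy of `H`. -/
def GadgetOK (a b : Fin 4 → ℕ) : Prop :=
  (∀ i, a i ≠ a (i + 1)) ∧ (∀ i, b i ≠ b (i + 1)) ∧
  (∀ i, a i ≠ b i) ∧ (∀ i, b i ≠ a (i + 1)) ∧
  (∀ i, UM3 (a i) (b i) (a (i + 1))) ∧
  (∀ i, UM3 (b i) (a (i + 1)) (b (i + 1))) ∧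
  UM4 (b 0) (b 1) (b 2) (b 3)

/-- The disjoint union `H ⊔ H'` of two copies of the gadget: vertices are `(copy, layer, i)`
where `layer = false` gives the outer vertex `a i` and `layer = true` the inner vertex `b i`;
edges are the two cycles, `a i — b i` and `b i — a (i+1)` in each copy. -/
def twoGadgets : SimpleGraph (Bool × Bool × Fin 4) :=
  SimpleGraph.fromRel fun v w =>
    v.1 = w.1 ∧
      ((v.2.1 = w.2.1 ∧ w.2.2 = v.2.2 + 1) ∨
       (v.2.1 = false ∧ w.2.1 = true ∧ w.2.2 = v.2.2) ∨
       (v.2.1 = true ∧ w.2.1 = false ∧ w.2.2 = v.2.2 + 1))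

instance (x y z : ℕ) : Decidable (UM3 x y z) := by unfold UM3; infer_instance
instance (w x y z : ℕ) : Decidable (UM4 w x y z) := by unfold UM4; infer_instance
instance (a b : Fin 4 → ℕ) : Decidable (GadgetOK a b) := by unfold GadgetOK; infer_instance

set_option maxRecDepth 100000 in
set_option maxHeartbeats 1000000 in
/-- Every admissible gadget coloring puts color 4 on some outer vertex. -/
lemma gadget_key : ∀ a b : Fin 4 → Fin 4,
    GadgetOK (fun i => (a i : ℕ) + 1) (fun i => (b i : ℕ) + 1) →
    ∃ i : Fin 4, (a i : ℕ) + 1 = 4 := by decide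

instance : DecidableRel twoGadgets.Adj := fun v w => by
  unfold twoGadgets; rw [SimpleGraph.fromRel_adj]; infer_instance

lemma adj_fst {v w : Bool × Bool × Fin 4} (h : twoGadgets.Adj v w) : v.1 = w.1 := by
  rw [twoGadgets, SimpleGraph.fromRel_adj] at h
  rcases h.2 with h | h
  · exact h.1
  · exact h.1.symm

lemma reach_fst {v w : Bool × Bool × Fin 4} (h : twoGadgets.Reachable v w) : v.1 = w.1 := by
  obtain ⟨p⟩ := h
  induction p with
  | nil => rfl
  | cons h _ ih => exact (adj_fst h).trans ih

lemma not_conn : ¬ twoGadgets.Connected := by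
  intro h
  have := reach_fst (h.preconnected (false, false, 0) (true, false, 0))
  simp at this

lemma card_le : ∀ v, (Finset.univ.filter fun w => twoGadgets.Adj v w).card ≤ 4 := by
  decide

lemma deg_le : ∀ v, {w | twoGadgets.Adj v w}.ncard ≤ 4 := by
  intro v
  have : {w | twoGadgets.Adj v w}.ncard =
      (Finset.univ.filter fun w => twoGadgets.Adj v w).card := by
    rw [Set.ncard_eq_toFinset_card']
    congr 1
    ext w
    simp
  rw [this]
  exact card_le v

/-- Turn a bounded coloring into a `Fin 4`-valued one and extract a 4-colored outer vertex. -/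
lemma exists_four (a b : Fin 4 → ℕ) (ha : ∀ i, 1 ≤ a i ∧ a i ≤ 4)
    (hb : ∀ i, 1 ≤ b i ∧ b i ≤ 4) (hg : GadgetOK a b) : ∃ i, a i = 4 := by
  have haf : ∀ i, a i - 1 < 4 := fun i => by have := ha i; omega
  have hbf : ∀ i, b i - 1 < 4 := fun i => by have := hb i; omega
  have hA : (fun i => ((⟨a i - 1, haf i⟩ : Fin 4) : ℕ) + 1) = a := by
    funext i; have := ha i; simp; omega
  have hB : (fun i => ((⟨b i - 1, hbf i⟩ : Fin 4) : ℕ) + 1) = b := by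
    funext i; have := hb i; simp; omega
  obtain ⟨i, hi⟩ := gadget_key (fun i => ⟨a i - 1, haf i⟩) (fun i => ⟨b i - 1, hbf i⟩)
    (by rw [hA, hB]; exact hg)
  refine ⟨i, ?_⟩
  have := ha i
  simp at hi
  omega

/-- Deleting the edge `a 3 — a' 1` from the counterexample `G` leaves a disconnected
graph of maximum degree `4` which still has no proper coloring with colors in
`{1,2,3,4}` making every face (the bounded faces of both copies and the common outer
face, whose boundary contains all eight `a`-vertices) unique-maximum. -/
theorem stmt_9 :
    ¬ twoGadgets.Connected ∧
    (∀ v, {w | twoGadgets.Adj v w}.ncard ≤ 4) ∧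
    ¬ ∃ a b a' b' : Fin 4 → ℕ,
      (∀ i, 1 ≤ a i ∧ a i ≤ 4) ∧ (∀ i, 1 ≤ b i ∧ b i ≤ 4) ∧
      (∀ i, 1 ≤ a' i ∧ a' i ≤ 4) ∧ (∀ i, 1 ≤ b' i ∧ b' i ≤ 4) ∧
      GadgetOK a b ∧ GadgetOK a' b' ∧
      UMList [a 0, a 1, a 2, a 3, a' 0, a' 1, a' 2, a' 3] := by
  refine ⟨not_conn, deg_le, ?_⟩
  rintro ⟨a, b, a', b', ha, hb, ha', hb', hg, hg', hum⟩
  obtain ⟨i, hi⟩ := exists_four a b ha hb hg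
  obtain ⟨j, hj⟩ := exists_four a' b' ha' hb' hg'
  set l : List ℕ := [a 0, a 1, a 2, a 3, a' 0, a' 1, a' 2, a' 3] with hl
  set p : ℕ → Bool := fun v => decide (∀ w ∈ l, w ≤ v) with hp
  have hp4 : p 4 = true := by
    rw [hp, decide_eq_true_iff]
    intro w hw
    rw [hl] at hw
    simp only [List.mem_cons, List.not_mem_nil, or_false] at hw
    rcases hw with h|h|h|h|h|h|h|h <;> subst h <;>
      first
        | exact (ha _).2
        | exact (ha' _).2
  have h1 : (4 : ℕ) ∈ ([a 0, a 1, a 2, a 3] : List ℕ).filter p := by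
    rw [List.mem_filter]
    refine ⟨?_, hp4⟩
    fin_cases i <;> simp [← hi]
  have h2 : (4 : ℕ) ∈ ([a' 0, a' 1, a' 2, a' 3] : List ℕ).filter p := by
    rw [List.mem_filter]
    refine ⟨?_, hp4⟩
    fin_cases j <;> simp [← hj]
  have e1 : 1 ≤ (([a 0, a 1, a 2, a 3] : List ℕ).filter p).length :=
    List.length_pos_iff.mpr (List.ne_nil_of_mem h1)
  have e2 : 1 ≤ (([a' 0, a' 1, a' 2, a' 3] : List ℕ).filter p).length :=
    List.length_pos_iff.mpr (List.ne_nil_of_mem h2)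
  have hsplit : l = [a 0, a 1, a 2, a 3] ++ [a' 0, a' 1, a' 2, a' 3] := by rw [hl]; rfl
  have : (l.filter p).length = (([a 0, a 1, a 2, a 3] : List ℕ).filter p).length
      + (([a' 0, a' 1, a' 2, a' 3] : List ℕ).filter p).length := by
    rw [hsplit, List.filter_append, List.length_append]
  rw [UMList, ← hp, this] at hum
  omega
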